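/- Let C be a small category with finite limits embedded as a full subcategory of a regular category D, closed under finite limits. Then the canonical functor U : C_{reg/lex} → D sending an object (f : X → Y) of the regular completion to the image Im(f) in D, and a morphism [l] : (f : X→Y) → (f' : X'→Y') to the unique morphism l̃ : Im(f) → Im(f') with l̃ ∘ f̄ = f̄' ∘ l, is well-defined (independent of the representative l) and faithful. -/

import Mathlib

/-! The quotient map `A ⟶ Im g` (the coequalizer of the kernel pair of `g`) identifies exactly
the pairs of morphisms that `g` identifies: one way by the coequalizer condition, the other by
factoring `g` through it. Since it is moreover epi, a morphism `φ` induces a unique map on images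
as soon as `φ ≫ g'` coequalizes the kernel pair of `g`, and two such induced maps agree exactly
when `φ₁ ≫ g' = φ₂ ≫ g'`. Faithfulness of `ι` transports this back to `C`. -/

open CategoryTheory Limits

namespace CategoryTheory.Limits

variable {D : Type*} [Category D]

section KernelPairCoequalizer

variable {A B T : D} (g : A ⟶ B) [HasPullback g g]
  [HasCoequalizer (pullback.fst g g) (pullback.snd g g)]

theorem comp_coequalizer_π_kernelPair_eq_iff (a b : T ⟶ A) :
    a ≫ coequalizer.π (pullback.fst g g) (pullback.snd g g)
        = b ≫ coequalizer.π (pullback.fst g g) (pullback.snd g g) ↔ a ≫ g = b ≫ g := by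
  constructor
  · intro h
    have hg := coequalizer.π_desc (f := pullback.fst g g) (g := pullback.snd g g) g
      pullback.condition
    rw [← hg, reassoc_of% h]
  · intro h
    calc a ≫ coequalizer.π _ _
        = pullback.lift a b h ≫ pullback.fst g g ≫ coequalizer.π _ _ := by
          rw [pullback.lift_fst_assoc]
      _ = pullback.lift a b h ≫ pullback.snd g g ≫ coequalizer.π _ _ := by
          rw [coequalizer.condition]
      _ = b ≫ coequalizer.π _ _ := pullback.lift_snd_assoc _ _ _ _

variable {A' B' : D} (g' : A' ⟶ B') [HasPullback g' g']
  [HasCoequalizer (pullback.fst g' g') (pullback.snd g' g')]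

theorem existsUnique_coequalizer_kernelPair_map (φ : A ⟶ A')
    (hφ : pullback.fst g g ≫ (φ ≫ g') = pullback.snd g g ≫ (φ ≫ g')) :
    ∃! lt : coequalizer (pullback.fst g g) (pullback.snd g g) ⟶
        coequalizer (pullback.fst g' g') (pullback.snd g' g'),
      coequalizer.π _ _ ≫ lt = φ ≫ coequalizer.π _ _ := by
  have hπ := (comp_coequalizer_π_kernelPair_eq_iff g' (pullback.fst g g ≫ φ)
    (pullback.snd g g ≫ φ)).2 (by simpa only [Category.assoc] using hφ)
  rw [Category.assoc, Category.assoc] at hπ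
  refine ⟨coequalizer.desc _ hπ, coequalizer.π_desc _ _, fun lt hlt => ?_⟩
  exact coequalizer.hom_ext (hlt.trans (coequalizer.π_desc _ _).symm)

theorem coequalizer_kernelPair_maps_eq_iff {φ₁ φ₂ : A ⟶ A'}
    {lt₁ lt₂ : coequalizer (pullback.fst g g) (pullback.snd g g) ⟶
        coequalizer (pullback.fst g' g') (pullback.snd g' g')}
    (h₁ : coequalizer.π _ _ ≫ lt₁ = φ₁ ≫ coequalizer.π _ _)
    (h₂ : coequalizer.π _ _ ≫ lt₂ = φ₂ ≫ coequalizer.π _ _) :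
    lt₁ = lt₂ ↔ φ₁ ≫ g' = φ₂ ≫ g' := by
  rw [← cancel_epi (coequalizer.π (pullback.fst g g) (pullback.snd g g)), h₁, h₂,
    comp_coequalizer_π_kernelPair_eq_iff]

end KernelPairCoequalizer

end CategoryTheory.Limits

theorem regular_completion_comparison_welldefined_and_faithful_general
    {C : Type*} [SmallCategory C]
    {D : Type*} [Category D] [HasFiniteLimits D]
    (hcoeq : ∀ {A B : D} (g : A ⟶ B), HasCoequalizer (pullback.fst g g) (pullback.snd g g))
    (ι : C ⥤ D) [ι.Faithful]
    {X Y X' Y' : C} (f : X ⟶ Y) (f' : X' ⟶ Y') :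
    haveI := hcoeq (ι.map f)
    haveI := hcoeq (ι.map f')
    -- existence and uniqueness of the induced morphism on images
    (∀ (l : X ⟶ X'),
        (pullback.fst (ι.map f) (ι.map f) ≫ (ι.map l ≫ ι.map f')
          = pullback.snd (ι.map f) (ι.map f) ≫ (ι.map l ≫ ι.map f')) →
        ∃! lt : coequalizer (pullback.fst (ι.map f) (ι.map f))
                  (pullback.snd (ι.map f) (ι.map f)) ⟶
                coequalizer (pullback.fst (ι.map f') (ι.map f'))
                  (pullback.snd (ι.map f') (ι.map f')),
          coequalizer.π _ _ ≫ lt = ι.map l ≫ coequalizer.π _ _) ∧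
    -- well-definedness and faithfulness: equal composites with f' iff equal induced maps
    (∀ (l₁ l₂ : X ⟶ X')
        (h₁ : pullback.fst (ι.map f) (ι.map f) ≫ (ι.map l₁ ≫ ι.map f')
          = pullback.snd (ι.map f) (ι.map f) ≫ (ι.map l₁ ≫ ι.map f'))
        (h₂ : pullback.fst (ι.map f) (ι.map f) ≫ (ι.map l₂ ≫ ι.map f')
          = pullback.snd (ι.map f) (ι.map f) ≫ (ι.map l₂ ≫ ι.map f'))
        (lt₁ lt₂ : coequalizer (pullback.fst (ι.map f) (ι.map f))
                  (pullback.snd (ι.map f) (ι.map f)) ⟶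
                coequalizer (pullback.fst (ι.map f') (ι.map f'))
                  (pullback.snd (ι.map f') (ι.map f'))),
        coequalizer.π _ _ ≫ lt₁ = ι.map l₁ ≫ coequalizer.π _ _ →
        coequalizer.π _ _ ≫ lt₂ = ι.map l₂ ≫ coequalizer.π _ _ →
        (l₁ ≫ f' = l₂ ≫ f' ↔ lt₁ = lt₂)) := by
  have := hcoeq (ι.map f)
  have := hcoeq (ι.map f')
  refine ⟨fun l => existsUnique_coequalizer_kernelPair_map _ _ (ι.map l),
    fun l₁ l₂ _ _ lt₁ lt₂ e₁ e₂ => ?_⟩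
  rw [coequalizer_kernelPair_maps_eq_iff _ _ e₁ e₂, ← ι.map_comp, ← ι.map_comp,
    ι.map_injective.eq_iff]

/-- Let `C` be a small category with finite limits, embedded as a full subcategory of a
regular category `D` closed under finite limits (via a fully faithful finite-limit-preserving
functor `ι`).  For objects `(f : X ⟶ Y)`, `(f' : X' ⟶ Y')` of the regular completion
`C_{reg/lex}` and a representative `l : X ⟶ X'` of a morphism (i.e. `ι(f') ∘ ι(l)`
coequalizes the kernel pair of `ι(f)`), there is a unique morphism
`l̃ : Im(ι f) ⟶ Im(ι f')` with `l̃ ∘ f̄ = f̄' ∘ ι(l)`; it is independent of the choice of the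
representative `l` (two representatives `l₁ ~ l₂`, i.e. `f' ∘ l₁ = f' ∘ l₂`, induce the same
morphism: well-definedness), and conversely equal induced morphisms come from equivalent
representatives (faithfulness). -/
theorem regular_completion_comparison_welldefined_and_faithful
    {C : Type*} [SmallCategory C] [HasFiniteLimits C]
    {D : Type*} [Category D] [HasFiniteLimits D]
    (hcoeq : ∀ {A B : D} (g : A ⟶ B), HasCoequalizer (pullback.fst g g) (pullback.snd g g))
    (hstab : ∀ {A B Z : D} (g : A ⟶ B) (h : Z ⟶ B),
      RegularEpi g → RegularEpi (pullback.snd g h))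
    (ι : C ⥤ D) [ι.Full] [ι.Faithful] [PreservesFiniteLimits ι]
    {X Y X' Y' : C} (f : X ⟶ Y) (f' : X' ⟶ Y') :
    haveI := hcoeq (ι.map f)
    haveI := hcoeq (ι.map f')
    -- existence and uniqueness of the induced morphism on images
    (∀ (l : X ⟶ X'),
        (pullback.fst (ι.map f) (ι.map f) ≫ (ι.map l ≫ ι.map f')
          = pullback.snd (ι.map f) (ι.map f) ≫ (ι.map l ≫ ι.map f')) →
        ∃! lt : coequalizer (pullback.fst (ι.map f) (ι.map f))
                  (pullback.snd (ι.map f) (ι.map f)) ⟶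
                coequalizer (pullback.fst (ι.map f') (ι.map f'))
                  (pullback.snd (ι.map f') (ι.map f')),
          coequalizer.π _ _ ≫ lt = ι.map l ≫ coequalizer.π _ _) ∧
    -- well-definedness and faithfulness: equal composites with f' iff equal induced maps
    (∀ (l₁ l₂ : X ⟶ X')
        (h₁ : pullback.fst (ι.map f) (ι.map f) ≫ (ι.map l₁ ≫ ι.map f')
          = pullback.snd (ι.map f) (ι.map f) ≫ (ι.map l₁ ≫ ι.map f'))
        (h₂ : pullback.fst (ι.map f) (ι.map f) ≫ (ι.map l₂ ≫ ι.map f')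
          = pullback.snd (ι.map f) (ι.map f) ≫ (ι.map l₂ ≫ ι.map f'))
        (lt₁ lt₂ : coequalizer (pullback.fst (ι.map f) (ι.map f))
                  (pullback.snd (ι.map f) (ι.map f)) ⟶
                coequalizer (pullback.fst (ι.map f') (ι.map f'))
                  (pullback.snd (ι.map f') (ι.map f'))),
        coequalizer.π _ _ ≫ lt₁ = ι.map l₁ ≫ coequalizer.π _ _ →
        coequalizer.π _ _ ≫ lt₂ = ι.map l₂ ≫ coequalizer.π _ _ →
        (l₁ ≫ f' = l₂ ≫ f' ↔ lt₁ = lt₂)) :=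
  regular_completion_comparison_welldefined_and_faithful_general hcoeq ι f f'
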